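/- arXiv:1505.02261 — 3 statements merged into one kernel-verified Lean document; each statement's English description precedes it below -/
import Mathlib

section
/- Let 0<r≤1, 2≤p₁<∞ and 1≤p₂≤2, with q₁ the conjugate exponent of p₁. Let (M,μ) be a finite measure space, ι a countable index set, and (u_ξ)_{ξ∈ι}, (v_ξ)_{ξ∈ι} families in L²(μ) with ‖u_ξ‖_{L²}=‖v_ξ‖_{L²}=1 for all ξ. Let σ : M×ι → ℂ be measurable with |σ(x,ξ)| ≤ γ(ξ) for all (x,ξ) and some γ : ι → [0,∞) satisfying ∑_{ξ∈ι} γ(ξ)^r < ∞. Let A : L^{p₁}(μ) → L^{p₂}(μ) be a bounded linear operator such that for every f ∈ L^{p₁}(μ), A f = ∑_{ξ∈ι} (∫_M f·\overline{v_ξ} dμ)·σ(·,ξ)·u_ξ, with the series converging in L^{p₂}(μ). Then A is r-nuclear from L^{p₁}(μ) to L^{p₂}(μ). -/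
/-!
The representation of `A` is already nuclear, with functionals `f ↦ ∫ f * conj v_ξ` and vectors
`σ(·, ξ) * u_ξ`. On a finite measure space `L^{p₁} ⊆ L² ⊆ L^{p₂}` continuously (as `p₂ ≤ 2 ≤ p₁`),
so Cauchy–Schwarz bounds the functionals uniformly and `|σ(·, ξ)| ≤ γ ξ` bounds the vectors by a
multiple of `γ ξ`; hence `∑ ‖φ_ξ‖^r ‖y_ξ‖^r ≲ ∑ γ(ξ)^r < ∞`.
-/

open MeasureTheory
open scoped ENNReal

noncomputable section

/-- A bounded linear operator `T : B₁ → B₂` is `r`-nuclear if there exist a sequence of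
continuous linear functionals `φ k` on `B₁` and a sequence `y k` in `B₂` such that
`T x = ∑ k, φ k x • y k` (converging in `B₂`) and `∑ k, ‖φ k‖^r * ‖y k‖^r < ∞`. -/
def IsRNuclear {B₁ B₂ : Type*} [NormedAddCommGroup B₁] [NormedSpace ℂ B₁]
    [NormedAddCommGroup B₂] [NormedSpace ℂ B₂] (r : ℝ) (T : B₁ →L[ℂ] B₂) : Prop :=
  ∃ (φ : ℕ → (B₁ →L[ℂ] ℂ)) (y : ℕ → B₂),
    (∀ x, HasSum (fun k => φ k x • y k) (T x)) ∧
    Summable (fun k => ‖φ k‖ ^ r * ‖y k‖ ^ r)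

open ComplexConjugate

theorem IsRNuclear.of_countable {B₁ B₂ ι : Type*} [NormedAddCommGroup B₁] [NormedSpace ℂ B₁]
    [NormedAddCommGroup B₂] [NormedSpace ℂ B₂] [Countable ι] {r : ℝ} (hr : r ≠ 0)
    {T : B₁ →L[ℂ] B₂} (φ : ι → B₁ →L[ℂ] ℂ) (y : ι → B₂)
    (hT : ∀ x, HasSum (fun i => φ i x • y i) (T x))
    (hs : Summable fun i => ‖φ i‖ ^ r * ‖y i‖ ^ r) :
    IsRNuclear r T := by
  obtain ⟨e, he⟩ := Countable.exists_injective_nat ι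
  have off_range : ∀ k ∉ Set.range e, Function.extend e φ 0 k = 0 :=
    fun k hk => Function.extend_apply' _ _ _ hk
  refine ⟨Function.extend e φ 0, Function.extend e y 0, fun x => ?_, ?_⟩
  · refine (he.hasSum_iff fun k hk => by simp [off_range k hk]).mp ?_
    simpa [Function.comp_def, he.extend_apply] using hT x
  · refine (he.summable_iff fun k hk => by simp [off_range k hk, Real.zero_rpow hr]).mp ?_
    simpa [Function.comp_def, he.extend_apply] using hs

namespace MeasureTheory.Lp

variable {α E : Type*} [MeasurableSpace α] {μ : Measure α} [IsFiniteMeasure μ]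
  [NormedAddCommGroup E] {p q : ℝ≥0∞} [Fact (1 ≤ p)] [Fact (1 ≤ q)]

def inclusionCLM (𝕜 : Type*) [NontriviallyNormedField 𝕜] [NormedSpace 𝕜 E] (hpq : p ≤ q) :
    Lp E q μ →L[𝕜] Lp E p μ :=
  LinearMap.mkContinuous
    { toFun := fun f => ⟨f, Lp.antitone hpq f.2⟩
      map_add' := fun _ _ => rfl
      map_smul' := fun _ _ => rfl }
    (μ Set.univ ^ (1 / p.toReal - 1 / q.toReal)).toReal
    (fun f => by
      have hexp : 0 ≤ 1 / p.toReal - 1 / q.toReal := by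
        rcases eq_or_ne q ∞ with rfl | hq
        · simp
        have hp0 : 0 < p.toReal := ENNReal.toReal_pos (one_pos.trans_le Fact.out).ne'
          (ne_top_of_le_ne_top hq hpq)
        exact sub_nonneg.2 (one_div_le_one_div_of_le hp0 (ENNReal.toReal_mono hq hpq))
      simp only [LinearMap.coe_mk, AddHom.coe_mk, Lp.norm_def, ← ENNReal.toReal_mul,
        mul_comm _ (eLpNorm _ q μ)]
      refine ENNReal.toReal_mono ?_
        (eLpNorm_le_eLpNorm_mul_rpow_measure_univ hpq (Lp.aestronglyMeasurable f))
      exact ENNReal.mul_ne_top (Lp.eLpNorm_ne_top f)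
        (ENNReal.rpow_lt_top_of_nonneg hexp (measure_ne_top μ _)).ne)

theorem coeFn_inclusionCLM (𝕜 : Type*) [NontriviallyNormedField 𝕜] [NormedSpace 𝕜 E]
    (hpq : p ≤ q) (f : Lp E q μ) : ⇑(inclusionCLM 𝕜 hpq f) = f :=
  rfl

theorem norm_inclusionCLM_le (𝕜 : Type*) [NontriviallyNormedField 𝕜] [NormedSpace 𝕜 E]
    (hpq : p ≤ q) :
    ‖(inclusionCLM 𝕜 hpq : Lp E q μ →L[𝕜] Lp E p μ)‖ ≤
      (μ Set.univ ^ (1 / p.toReal - 1 / q.toReal)).toReal :=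
  LinearMap.mkContinuous_norm_le _ ENNReal.toReal_nonneg _

end MeasureTheory.Lp

section

variable {α : Type*} [MeasurableSpace α] {μ : Measure α} [IsFiniteMeasure μ]

theorem exists_clm_eq_integral_mul_conj {p : ℝ≥0∞} [Fact (1 ≤ p)] (hp : 2 ≤ p) {w : α → ℂ}
    (hw : MemLp w 2 μ) :
    ∃ φ : Lp ℂ p μ →L[ℂ] ℂ, (∀ f, φ f = ∫ x, f x * conj (w x) ∂μ) ∧
      ‖φ‖ ≤ (eLpNorm w 2 μ).toReal *
        (μ Set.univ ^ (1 / (2 : ℝ≥0∞).toReal - 1 / p.toReal)).toReal := by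
  refine ⟨(innerSL ℂ (hw.toLp w)).comp (Lp.inclusionCLM ℂ hp), fun f => ?_, ?_⟩
  · simp only [ContinuousLinearMap.comp_apply, innerSL_apply_apply, L2.inner_def,
      Lp.coeFn_inclusionCLM, RCLike.inner_apply]
    refine integral_congr_ae ?_
    filter_upwards [hw.coeFn_toLp] with x hx
    rw [hx]
  · calc _ ≤ ‖innerSL ℂ (hw.toLp w)‖ * ‖(Lp.inclusionCLM ℂ hp : Lp ℂ p μ →L[ℂ] Lp ℂ 2 μ)‖ :=
          ContinuousLinearMap.opNorm_comp_le _ _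
      _ ≤ _ := by
        rw [innerSL_apply_norm, Lp.norm_toLp]
        gcongr
        exact Lp.norm_inclusionCLM_le ℂ hp

theorem norm_toLp_mul_le {p : ℝ≥0∞} [Fact (1 ≤ p)] (hp : p ≤ 2) {s u : α → ℂ} {c : ℝ}
    (hc : 0 ≤ c) (hs : ∀ x, ‖s x‖ ≤ c) (hu : MemLp u 2 μ) (hsu : MemLp (fun x => s x * u x) p μ) :
    ‖hsu.toLp _‖ ≤ c * ((eLpNorm u 2 μ).toReal *
      (μ Set.univ ^ (1 / p.toReal - 1 / (2 : ℝ≥0∞).toReal)).toReal) := by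
  calc ‖hsu.toLp _‖ ≤ c * ‖Lp.inclusionCLM ℂ hp (hu.toLp u)‖ := by
        refine Lp.norm_le_mul_norm_of_ae_le_mul ?_
        filter_upwards [hsu.coeFn_toLp, hu.coeFn_toLp] with x hsux hux
        rw [hsux, Lp.coeFn_inclusionCLM, hux, norm_mul]
        exact mul_le_mul_of_nonneg_right (hs x) (norm_nonneg _)
    _ ≤ _ := by
        gcongr
        refine (ContinuousLinearMap.le_opNorm _ _).trans ?_
        rw [Lp.norm_toLp, mul_comm]
        gcongr
        exact Lp.norm_inclusionCLM_le ℂ hp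

theorem summable_rpow_mul_rpow_of_le {ι : Type*} {a b γ : ι → ℝ} {C₁ C₂ r : ℝ} (hr : 0 ≤ r)
    (ha₀ : ∀ i, 0 ≤ a i) (hb₀ : ∀ i, 0 ≤ b i) (hγ₀ : ∀ i, 0 ≤ γ i) (hC₂ : 0 ≤ C₂)
    (ha : ∀ i, a i ≤ C₁) (hb : ∀ i, b i ≤ γ i * C₂) (hγ : Summable fun i => γ i ^ r) :
    Summable fun i => a i ^ r * b i ^ r := by
  refine .of_nonneg_of_le (fun i => by have := ha₀ i; have := hb₀ i; positivity) (fun i => ?_)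
    (hγ.mul_left (C₁ ^ r * C₂ ^ r))
  calc a i ^ r * b i ^ r ≤ C₁ ^ r * (γ i * C₂) ^ r := by
        have := ha₀ i; have := hb₀ i; have := (ha₀ i).trans (ha i)
        gcongr
        exacts [ha i, hb i]
    _ = C₁ ^ r * C₂ ^ r * γ i ^ r := by rw [Real.mul_rpow (hγ₀ i) hC₂]; ring

end

theorem statement_10_general
    {M : Type*} [MeasurableSpace M] {μ : Measure M} [IsFiniteMeasure μ]
    {ι : Type*} [Countable ι]
    (r : ℝ) (hr0 : 0 < r)
    (p₁ p₂ : ℝ≥0∞) [Fact (1 ≤ p₁)] [Fact (1 ≤ p₂)]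
    (h2p₁ : 2 ≤ p₁) (hp₂2 : p₂ ≤ 2)
    (u v : ι → M → ℂ)
    (hu2 : ∀ ξ, MemLp (u ξ) 2 μ) (hv2 : ∀ ξ, MemLp (v ξ) 2 μ)
    (hun : ∀ ξ, eLpNorm (u ξ) 2 μ = 1) (hvn : ∀ ξ, eLpNorm (v ξ) 2 μ = 1)
    (σ : ι → M → ℂ)
    (γ : ι → ℝ) (hγ : ∀ ξ x, ‖σ ξ x‖ ≤ γ ξ)
    (hsum : Summable fun ξ => γ ξ ^ r)
    (hmem : ∀ ξ, MemLp (fun x => σ ξ x * u ξ x) p₂ μ)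
    (A : Lp ℂ p₁ μ →L[ℂ] Lp ℂ p₂ μ)
    (hA : ∀ f : Lp ℂ p₁ μ,
      HasSum (fun ξ => (∫ x, f x * (starRingEnd ℂ) (v ξ x) ∂μ)
        • MemLp.toLp (fun x => σ ξ x * u ξ x) (hmem ξ)) (A f)) :
    IsRNuclear r A := by
  have hγ0 : ∀ ξ, 0 ≤ γ ξ := fun ξ => by
    rcases isEmpty_or_nonempty M with _ | ⟨⟨x⟩⟩
    · simpa [Measure.eq_zero_of_isEmpty μ] using hun ξ
    · exact (norm_nonneg _).trans (hγ ξ x)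
  choose φ hφ hφ_norm using fun ξ => exists_clm_eq_integral_mul_conj (μ := μ) h2p₁ (hv2 ξ)
  refine IsRNuclear.of_countable hr0.ne' φ (fun ξ => (hmem ξ).toLp _)
    (fun f => by simpa only [hφ] using hA f) ?_
  set C₁ := (μ Set.univ ^ (1 / (2 : ℝ≥0∞).toReal - 1 / p₁.toReal)).toReal
  set C₂ := (μ Set.univ ^ (1 / p₂.toReal - 1 / (2 : ℝ≥0∞).toReal)).toReal
  have hφ_le ξ : ‖φ ξ‖ ≤ C₁ := by
    simpa only [hvn, ENNReal.toReal_one, one_mul] using hφ_norm ξ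
  have hy_le ξ : ‖(hmem ξ).toLp _‖ ≤ γ ξ * C₂ := by
    simpa only [hun, ENNReal.toReal_one, one_mul] using
      norm_toLp_mul_le hp₂2 (hγ0 ξ) (hγ ξ) (hu2 ξ) (hmem ξ)
  exact summable_rpow_mul_rpow_of_le hr0.le (fun _ => norm_nonneg _) (fun _ => norm_nonneg _) hγ0
    ENNReal.toReal_nonneg hφ_le hy_le hsum

theorem statement_10
    {M : Type*} [MeasurableSpace M] {μ : Measure M} [IsFiniteMeasure μ]
    {ι : Type*} [Countable ι]
    (r : ℝ) (hr0 : 0 < r) (hr1 : r ≤ 1)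
    (p₁ p₂ q₁ : ℝ≥0∞) [Fact (1 ≤ p₁)] [Fact (1 ≤ p₂)] [Fact (1 ≤ q₁)]
    (h2p₁ : 2 ≤ p₁) (hp₁' : p₁ ≠ ∞) (hp₂2 : p₂ ≤ 2)
    (hq : 1 / p₁ + 1 / q₁ = 1)
    (u v : ι → M → ℂ)
    (hu2 : ∀ ξ, MemLp (u ξ) 2 μ) (hv2 : ∀ ξ, MemLp (v ξ) 2 μ)
    (hun : ∀ ξ, eLpNorm (u ξ) 2 μ = 1) (hvn : ∀ ξ, eLpNorm (v ξ) 2 μ = 1)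
    (σ : ι → M → ℂ) (hσm : ∀ ξ, AEStronglyMeasurable (σ ξ) μ)
    (γ : ι → ℝ) (hγ : ∀ ξ x, ‖σ ξ x‖ ≤ γ ξ)
    (hsum : Summable fun ξ => γ ξ ^ r)
    (hmem : ∀ ξ, MemLp (fun x => σ ξ x * u ξ x) p₂ μ)
    (A : Lp ℂ p₁ μ →L[ℂ] Lp ℂ p₂ μ)
    (hA : ∀ f : Lp ℂ p₁ μ,
      HasSum (fun ξ => (∫ x, f x * (starRingEnd ℂ) (v ξ x) ∂μ)
        • MemLp.toLp (fun x => σ ξ x * u ξ x) (hmem ξ)) (A f)) :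
    IsRNuclear r A :=
  statement_10_general r hr0 p₁ p₂ h2p₁ hp₂2 u v hu2 hv2 hun hvn σ γ hγ hsum hmem A hA
end
end

section
/- Let 0<r≤1, 2≤p<∞, s₀>0 and s ≥ ν₁·(p-2)/p + s₀/r. Let (M,μ) be a finite measure space, ι a countable index set, w : ι → [1,∞) with ∑_{ξ∈ι} w(ξ)^{-s₀} < ∞, and (u_ξ)_{ξ∈ι}, (v_ξ)_{ξ∈ι} families in L²(μ)∩L^∞(μ) with ‖u_ξ‖_{L²}=‖v_ξ‖_{L²}=1 and ‖u_ξ‖_{L^∞} ≤ C₁·w(ξ)^{ν₁} for all ξ, where C₁,ν₁ > 0. Let σ : M×ι → ℂ be measurable with |σ(x,ξ)| ≤ C·w(ξ)^{-s} for all (x,ξ) and some C>0. Let A : L^{p}(μ) → L^{p}(μ) be a bounded linear operator such that for every f ∈ L^{p}(μ), A f = ∑_{ξ∈ι} (∫_M f·\overline{v_ξ} dμ)·σ(·,ξ)·u_ξ, with the series converging in L^{p}(μ). Then A is r-nuclear from L^{p}(μ) to L^{p}(μ). -/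
/-!
Each term of the expansion is `f ↦ ⟪v_ξ, f⟫_{L²}` times `σ(·, ξ) u_ξ`. The functionals are bounded on
`Lᵖ` uniformly in `ξ`, since `Lᵖ ↪ L²` continuously on a finite measure space and `‖v_ξ‖₂ = 1`.
Interpolating between `L²` and `L^∞`, `‖u_ξ‖_p ≤ ‖u_ξ‖_∞^{1-2/p} ‖u_ξ‖₂^{2/p} ≤ (C₁ w(ξ)^{ν₁})^{1-2/p}`,
so `‖σ(·, ξ) u_ξ‖_p ≲ w(ξ)^{ν₁(p-2)/p - s}`, and the condition on `s` makes the `r`-th powers of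
the products bounded by a multiple of the summable `w(ξ)^{-s₀}`.
-/

open MeasureTheory
open scoped ENNReal

noncomputable section

open Function

theorem Function.extend_zero_map₂ {ι κ α β γ : Type*} [Zero α] [Zero β] [Zero γ] {e : ι → κ}
    (he : Injective e) (F : α → β → γ) (hF : F 0 0 = 0) (f : ι → α) (g : ι → β) :
    (fun k => F (extend e f 0 k) (extend e g 0 k)) = extend e (fun i => F (f i) (g i)) 0 := by
  funext k
  by_cases hk : ∃ i, e i = k
  · obtain ⟨i, rfl⟩ := hk
    simp only [he.extend_apply]
  · simp only [extend_apply' _ _ _ hk, Pi.zero_apply, hF]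

theorem IsRNuclear.of_hasSum {B₁ B₂ : Type*} [NormedAddCommGroup B₁] [NormedSpace ℂ B₁]
    [NormedAddCommGroup B₂] [NormedSpace ℂ B₂] {ι : Type*} [Countable ι] {r : ℝ} (hr : r ≠ 0)
    {T : B₁ →L[ℂ] B₂} (φ : ι → B₁ →L[ℂ] ℂ) (y : ι → B₂)
    (hT : ∀ x, HasSum (fun i => φ i x • y i) (T x))
    (hφy : Summable fun i => ‖φ i‖ ^ r * ‖y i‖ ^ r) : IsRNuclear r T := by
  obtain ⟨e, he⟩ := Countable.exists_injective_nat ι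
  refine ⟨extend e φ 0, extend e y 0, fun x => ?_, ?_⟩
  · rw [extend_zero_map₂ he (fun (ψ : B₁ →L[ℂ] ℂ) z => ψ x • z) (by simp), hasSum_extend_zero he]
    exact hT x
  · rw [extend_zero_map₂ he (fun (ψ : B₁ →L[ℂ] ℂ) (z : B₂) => ‖ψ‖ ^ r * ‖z‖ ^ r)
      (by simp [Real.zero_rpow hr]), summable_extend_zero he]
    exact hφy

namespace MeasureTheory.Lp

variable {α E 𝕜 : Type*} [MeasurableSpace α] {μ : Measure α} [IsFiniteMeasure μ]
  [NormedAddCommGroup E] [NormedField 𝕜] [NormedSpace 𝕜 E] {p q : ℝ≥0∞}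

def inclusionOfLE [Fact (1 ≤ p)] [Fact (1 ≤ q)] (hqp : q ≤ p) : Lp E p μ →L[𝕜] Lp E q μ :=
  LinearMap.mkContinuous
    { toFun := fun f => ((Lp.memLp f).mono_exponent hqp).toLp f
      map_add' := fun f g => by
        rw [← MemLp.toLp_add]
        exact MemLp.toLp_congr _ _ (Lp.coeFn_add f g)
      map_smul' := fun c f => by
        rw [RingHom.id_apply, ← MemLp.toLp_const_smul]
        exact MemLp.toLp_congr _ _ (Lp.coeFn_smul c f) }
    ((μ Set.univ).toReal ^ (1 / q.toReal - 1 / p.toReal)) fun f => by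
      have hexp : 0 ≤ 1 / q.toReal - 1 / p.toReal := by
        rcases eq_or_ne p ∞ with rfl | hp
        · simp
        have hq : q ≠ 0 := (zero_lt_one.trans_le (Fact.out : 1 ≤ q)).ne'
        have := one_div_le_one_div_of_le (ENNReal.toReal_pos hq (ne_top_of_le_ne_top hp hqp))
          (ENNReal.toReal_mono hp hqp)
        linarith
      rw [LinearMap.coe_mk, AddHom.coe_mk, Lp.norm_toLp, Lp.norm_def, ENNReal.toReal_rpow,
        ← ENNReal.toReal_mul, mul_comm]
      exact ENNReal.toReal_mono (ENNReal.mul_ne_top (Lp.eLpNorm_ne_top f)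
        (ENNReal.rpow_ne_top_of_nonneg hexp (measure_ne_top μ _)))
        (eLpNorm_le_eLpNorm_mul_rpow_measure_univ hqp (Lp.aestronglyMeasurable f))

theorem coeFn_inclusionOfLE [Fact (1 ≤ p)] [Fact (1 ≤ q)] (hqp : q ≤ p) (f : Lp E p μ) :
    inclusionOfLE (𝕜 := 𝕜) hqp f =ᵐ[μ] f :=
  MemLp.coeFn_toLp ((Lp.memLp f).mono_exponent hqp)

end MeasureTheory.Lp

namespace MeasureTheory

variable {α : Type*} [MeasurableSpace α] {μ : Measure α}

theorem eLpNorm_le_eLpNorm_top_rpow_mul_eLpNorm_rpow {E : Type*} [NormedAddCommGroup E]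
    {f : α → E} (hf : AEStronglyMeasurable f μ) {p q : ℝ≥0∞} (hq : q ≠ 0) (hqp : q ≤ p)
    (hp : p ≠ ∞) :
    eLpNorm f p μ ≤
      eLpNorm f ∞ μ ^ (1 - q.toReal / p.toReal) * eLpNorm f q μ ^ (q.toReal / p.toReal) := by
  set B := eLpNorm f ∞ μ
  have hq' : q ≠ ∞ := ne_top_of_le_ne_top hp hqp
  have hq0 : 0 < q.toReal := ENNReal.toReal_pos hq hq'
  have hp0 : 0 < p.toReal := hq0.trans_le (ENNReal.toReal_mono hp hqp)
  have hqp' : q.toReal ≤ p.toReal := ENNReal.toReal_mono hp hqp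
  have hpoint : ∀ᵐ x ∂μ, ‖f x‖ₑ ^ p.toReal ≤ B ^ (p.toReal - q.toReal) * ‖f x‖ₑ ^ q.toReal := by
    filter_upwards [enorm_ae_le_eLpNormEssSup f μ] with x hx
    calc ‖f x‖ₑ ^ p.toReal = ‖f x‖ₑ ^ (p.toReal - q.toReal) * ‖f x‖ₑ ^ q.toReal := by
          rw [← ENNReal.rpow_add_of_nonneg _ _ (sub_nonneg.2 hqp') hq0.le, sub_add_cancel]
      _ ≤ B ^ (p.toReal - q.toReal) * ‖f x‖ₑ ^ q.toReal := by
          gcongr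
          exact hx.trans_eq eLpNorm_exponent_top.symm
  have hint : ∫⁻ x, ‖f x‖ₑ ^ p.toReal ∂μ ≤
      B ^ (p.toReal - q.toReal) * ∫⁻ x, ‖f x‖ₑ ^ q.toReal ∂μ :=
    (lintegral_mono_ae hpoint).trans_eq (lintegral_const_mul'' _ (hf.enorm.pow_const _))
  rw [eLpNorm_eq_lintegral_rpow_enorm_toReal (hq.bot_lt.trans_le hqp).ne' hp,
    eLpNorm_eq_lintegral_rpow_enorm_toReal hq hq']
  calc (∫⁻ x, ‖f x‖ₑ ^ p.toReal ∂μ) ^ (1 / p.toReal)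
      ≤ (B ^ (p.toReal - q.toReal) * ∫⁻ x, ‖f x‖ₑ ^ q.toReal ∂μ) ^ (1 / p.toReal) := by
        gcongr
    _ = _ := by
        rw [ENNReal.mul_rpow_of_nonneg _ _ (by positivity), ← ENNReal.rpow_mul,
          ← ENNReal.rpow_mul]
        congr 2 <;> field_simp

theorem eLpNorm_mul_le_of_eLpNorm_two_eq_one {R : Type*} [NormedRing R] {σ u : α → R}
    (hu : AEStronglyMeasurable u μ) {p : ℝ≥0∞} (h2p : 2 ≤ p) (hp : p ≠ ∞) {c : ℝ}
    (hσ : ∀ x, ‖σ x‖ ≤ c) (hu2 : eLpNorm u 2 μ = 1) :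
    eLpNorm (fun x => σ x * u x) p μ ≤ ENNReal.ofReal c * eLpNorm u ∞ μ ^ (1 - 2 / p.toReal) := by
  refine (eLpNorm_le_mul_eLpNorm_of_ae_le_mul (ae_of_all _ fun x =>
    (norm_mul_le _ _).trans (mul_le_mul_of_nonneg_right (hσ x) (norm_nonneg _))) p).trans ?_
  gcongr
  simpa [hu2] using eLpNorm_le_eLpNorm_top_rpow_mul_eLpNorm_rpow hu two_ne_zero h2p hp

theorem Lp.norm_toLp_mul_le {R : Type*} [NormedRing R] {σ u : α → R} {p : ℝ≥0∞} [Fact (1 ≤ p)]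
    (hmem : MemLp (fun x => σ x * u x) p μ) (hu : AEStronglyMeasurable u μ) (h2p : 2 ≤ p)
    (hp : p ≠ ∞) {c B : ℝ} (hc : 0 ≤ c) (hB : 0 ≤ B) (hσ : ∀ x, ‖σ x‖ ≤ c)
    (hu2 : eLpNorm u 2 μ = 1) (huB : eLpNorm u ∞ μ ≤ ENNReal.ofReal B) :
    ‖hmem.toLp _‖ ≤ c * B ^ (1 - 2 / p.toReal) := by
  have hθ : 0 ≤ 1 - 2 / p.toReal := by
    have : 2 ≤ p.toReal := by simpa using ENNReal.toReal_mono hp h2p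
    rw [sub_nonneg, div_le_one (by linarith)]
    exact this
  rw [Lp.norm_toLp]
  refine ENNReal.toReal_le_of_le_ofReal (by positivity) ?_
  calc eLpNorm (fun x => σ x * u x) p μ
      ≤ ENNReal.ofReal c * eLpNorm u ∞ μ ^ (1 - 2 / p.toReal) :=
        eLpNorm_mul_le_of_eLpNorm_two_eq_one hu h2p hp hσ hu2
    _ ≤ ENNReal.ofReal c * ENNReal.ofReal B ^ (1 - 2 / p.toReal) := by gcongr
    _ = ENNReal.ofReal (c * B ^ (1 - 2 / p.toReal)) := by
        rw [ENNReal.ofReal_rpow_of_nonneg hB hθ, ENNReal.ofReal_mul hc]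

theorem inner_toLp_inclusionOfLE {𝕜 : Type*} [RCLike 𝕜] [IsFiniteMeasure μ] {p : ℝ≥0∞}
    [Fact (1 ≤ p)] (h2p : 2 ≤ p) {v : α → 𝕜} (hv : MemLp v 2 μ) (f : Lp 𝕜 p μ) :
    inner 𝕜 (hv.toLp v) (Lp.inclusionOfLE (𝕜 := 𝕜) h2p f) = ∫ x, f x * starRingEnd 𝕜 (v x) ∂μ := by
  rw [L2.inner_def]
  refine integral_congr_ae ?_
  filter_upwards [hv.coeFn_toLp, Lp.coeFn_inclusionOfLE (𝕜 := 𝕜) h2p f] with x hvx hfx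
  rw [hvx, hfx, RCLike.inner_apply, mul_comm]

end MeasureTheory

theorem Real.rpow_le_mul_rpow_neg_of_le {x a w t s₀ r : ℝ} (hx : 0 ≤ x) (ha : 0 ≤ a) (hw : 1 ≤ w)
    (hr : 0 ≤ r) (h : x ≤ a * w ^ (-t)) (ht : s₀ ≤ t * r) : x ^ r ≤ a ^ r * w ^ (-s₀) :=
  calc x ^ r ≤ (a * w ^ (-t)) ^ r := by gcongr
    _ = a ^ r * w ^ (-(t * r)) := by
        rw [Real.mul_rpow ha (by positivity), ← Real.rpow_mul (by positivity), neg_mul]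
    _ ≤ a ^ r * w ^ (-s₀) := by gcongr

theorem statement_11_general
    {M : Type*} [MeasurableSpace M] {μ : Measure M} [IsFiniteMeasure μ]
    {ι : Type*} [Countable ι]
    (r : ℝ) (hr0 : 0 < r)
    (p : ℝ≥0∞) [Fact (1 ≤ p)] (h2p : 2 ≤ p) (hp' : p ≠ ∞)
    (s₀ s ν₁ C₁ C : ℝ) (hC₁ : 0 < C₁) (hC : 0 < C)
    (hsexp : ν₁ * (p.toReal - 2) / p.toReal + s₀ / r ≤ s)
    (w : ι → ℝ) (hw : ∀ ξ, 1 ≤ w ξ)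
    (hw0 : Summable fun ξ => w ξ ^ (-s₀))
    (u v : ι → M → ℂ)
    (hu2 : ∀ ξ, MemLp (u ξ) 2 μ) (hv2 : ∀ ξ, MemLp (v ξ) 2 μ)
    (hun : ∀ ξ, eLpNorm (u ξ) 2 μ = 1) (hvn : ∀ ξ, eLpNorm (v ξ) 2 μ = 1)
    (hub : ∀ ξ, eLpNorm (u ξ) ∞ μ ≤ ENNReal.ofReal (C₁ * w ξ ^ ν₁))
    (σ : ι → M → ℂ)
    (hσb : ∀ ξ x, ‖σ ξ x‖ ≤ C * w ξ ^ (-s))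
    (hmem : ∀ ξ, MemLp (fun x => σ ξ x * u ξ x) p μ)
    (A : Lp ℂ p μ →L[ℂ] Lp ℂ p μ)
    (hA : ∀ f : Lp ℂ p μ,
      HasSum (fun ξ => (∫ x, f x * (starRingEnd ℂ) (v ξ x) ∂μ)
        • MemLp.toLp (fun x => σ ξ x * u ξ x) (hmem ξ)) (A f)) :
    IsRNuclear r A := by
  set θ := 1 - 2 / p.toReal
  have hs : s₀ ≤ (s - ν₁ * θ) * r := by
    have hp : 0 < p.toReal := ENNReal.toReal_pos (by positivity) hp'
    have : ν₁ * (p.toReal - 2) / p.toReal = ν₁ * θ := by simp only [θ]; field_simp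
    rw [← div_le_iff₀ hr0]
    linarith
  set J := Lp.inclusionOfLE (E := ℂ) (𝕜 := ℂ) (μ := μ) h2p
  set Φ : ι → Lp ℂ p μ →L[ℂ] ℂ := fun ξ => (innerSL ℂ ((hv2 ξ).toLp (v ξ))).comp J
  have hΦ : ∀ ξ, ‖Φ ξ‖ ≤ ‖J‖ := fun ξ => (ContinuousLinearMap.opNorm_comp_le _ _).trans_eq (by
    rw [innerSL_apply_norm, Lp.norm_toLp, hvn, ENNReal.toReal_one, one_mul])
  have hY : ∀ ξ, ‖(hmem ξ).toLp _‖ ≤ C * C₁ ^ θ * w ξ ^ (-(s - ν₁ * θ)) := fun ξ => by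
    have hwξ : 0 < w ξ := zero_lt_one.trans_le (hw ξ)
    calc _ ≤ C * w ξ ^ (-s) * (C₁ * w ξ ^ ν₁) ^ θ :=
          Lp.norm_toLp_mul_le _ (hu2 ξ).1 h2p hp' (by positivity) (by positivity) (hσb ξ) (hun ξ)
            (hub ξ)
      _ = _ := by
          rw [Real.mul_rpow hC₁.le (by positivity), ← Real.rpow_mul hwξ.le, neg_sub,
            Real.rpow_sub hwξ, Real.rpow_neg hwξ.le]
          ring
  refine IsRNuclear.of_hasSum hr0.ne' Φ (fun ξ => (hmem ξ).toLp _) (fun f => ?_) ?_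
  · simpa only [Φ, J, ContinuousLinearMap.comp_apply, innerSL_apply_apply,
      inner_toLp_inclusionOfLE] using hA f
  · refine (hw0.mul_left (‖J‖ ^ r * (C * C₁ ^ θ) ^ r)).of_nonneg_of_le (fun ξ => by positivity)
      fun ξ => ?_
    rw [mul_assoc]
    exact mul_le_mul (Real.rpow_le_rpow (norm_nonneg _) (hΦ ξ) hr0.le)
      (Real.rpow_le_mul_rpow_neg_of_le (norm_nonneg _) (by positivity) (hw ξ) hr0.le (hY ξ) hs)
      (by positivity) (by positivity)

theorem statement_11
    {M : Type*} [MeasurableSpace M] {μ : Measure M} [IsFiniteMeasure μ]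
    {ι : Type*} [Countable ι]
    (r : ℝ) (hr0 : 0 < r) (hr1 : r ≤ 1)
    (p : ℝ≥0∞) [Fact (1 ≤ p)] (h2p : 2 ≤ p) (hp' : p ≠ ∞)
    (s₀ s ν₁ C₁ C : ℝ) (hs₀ : 0 < s₀) (hν₁ : 0 < ν₁) (hC₁ : 0 < C₁) (hC : 0 < C)
    (hsexp : ν₁ * (p.toReal - 2) / p.toReal + s₀ / r ≤ s)
    (w : ι → ℝ) (hw : ∀ ξ, 1 ≤ w ξ)
    (hw0 : Summable fun ξ => w ξ ^ (-s₀))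
    (u v : ι → M → ℂ)
    (hu2 : ∀ ξ, MemLp (u ξ) 2 μ) (hv2 : ∀ ξ, MemLp (v ξ) 2 μ)
    (huI : ∀ ξ, MemLp (u ξ) ∞ μ) (hvI : ∀ ξ, MemLp (v ξ) ∞ μ)
    (hun : ∀ ξ, eLpNorm (u ξ) 2 μ = 1) (hvn : ∀ ξ, eLpNorm (v ξ) 2 μ = 1)
    (hub : ∀ ξ, eLpNorm (u ξ) ∞ μ ≤ ENNReal.ofReal (C₁ * w ξ ^ ν₁))
    (σ : ι → M → ℂ) (hσm : ∀ ξ, AEStronglyMeasurable (σ ξ) μ)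
    (hσb : ∀ ξ x, ‖σ ξ x‖ ≤ C * w ξ ^ (-s))
    (hmem : ∀ ξ, MemLp (fun x => σ ξ x * u ξ x) p μ)
    (A : Lp ℂ p μ →L[ℂ] Lp ℂ p μ)
    (hA : ∀ f : Lp ℂ p μ,
      HasSum (fun ξ => (∫ x, f x * (starRingEnd ℂ) (v ξ x) ∂μ)
        • MemLp.toLp (fun x => σ ξ x * u ξ x) (hmem ξ)) (A f)) :
    IsRNuclear r A :=
  statement_11_general r hr0 p h2p hp' s₀ s ν₁ C₁ C hC₁ hC hsexp w hw hw0 u v hu2 hv2 hun hvn hub σ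
    hσb hmem A hA
end
end

section
/- Let 0<r≤1, 1≤p≤2, s₀>0 and s ≥ ν₂·(2/p-1) + s₀/r. Let (M,μ) be a finite measure space, ι a countable index set, w : ι → [1,∞) with ∑_{ξ∈ι} w(ξ)^{-s₀} < ∞, and (u_ξ)_{ξ∈ι}, (v_ξ)_{ξ∈ι} families in L²(μ)∩L^∞(μ) with ‖u_ξ‖_{L²}=‖v_ξ‖_{L²}=1 and ‖v_ξ‖_{L^∞} ≤ C₂·w(ξ)^{ν₂} for all ξ, where C₂,ν₂ > 0. Let σ : M×ι → ℂ be measurable with |σ(x,ξ)| ≤ C·w(ξ)^{-s} for all (x,ξ) and some C>0. Let A : L^{p}(μ) → L^{p}(μ) be a bounded linear operator such that for every f ∈ L^{p}(μ), A f = ∑_{ξ∈ι} (∫_M f·\overline{v_ξ} dμ)·σ(·,ξ)·u_ξ, with the series converging in L^{p}(μ). Then A is r-nuclear from L^{p}(μ) to L^{p}(μ). -/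
/-!
Write `A = ∑ φ_ξ ⊗ y_ξ` with `φ_ξ f = ∫ f · conj v_ξ` and `y_ξ = σ(·, ξ) u_ξ`. By Hölder,
`‖φ_ξ‖ ≤ ‖v_ξ‖_{p'}`, and since `p' ≥ 2`, interpolating between `L²` and `L^∞` gives
`‖v_ξ‖_{p'} ≤ ‖v_ξ‖_2^{2/p'} ‖v_ξ‖_∞^{2/p - 1} ≲ w(ξ)^{ν₂ (2/p - 1)}`. On a finite measure space
`‖y_ξ‖_p ≤ μ(M)^{1/p - 1/2} ‖y_ξ‖_2 ≲ w(ξ)^{-s}`. Hence `(‖φ_ξ‖ ‖y_ξ‖)^r ≲ w(ξ)^{-s₀}`, which is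
summable, and enumerating the countable index set gives an `r`-nuclear decomposition.
-/

open MeasureTheory
open scoped ENNReal

noncomputable section

theorem isRNuclear_of_hasSum {B₁ B₂ : Type*} [NormedAddCommGroup B₁] [NormedSpace ℂ B₁]
    [NormedAddCommGroup B₂] [NormedSpace ℂ B₂] {ι : Type*} [Countable ι] {r : ℝ} (hr : r ≠ 0)
    (T : B₁ →L[ℂ] B₂) (φ : ι → B₁ →L[ℂ] ℂ) (y : ι → B₂)
    (hT : ∀ x, HasSum (fun i => φ i x • y i) (T x))
    (hφy : Summable fun i => ‖φ i‖ ^ r * ‖y i‖ ^ r) :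
    IsRNuclear r T := by
  obtain ⟨e, he⟩ := Countable.exists_injective_nat ι
  refine ⟨Function.extend e φ 0, Function.extend e y 0, fun x => ?_, ?_⟩
  · refine (he.hasSum_iff fun k hk => ?_).1 ?_
    · simp [Function.extend_apply' _ _ _ (by simpa using hk)]
    · simpa only [Function.comp_def, he.extend_apply] using hT x
  · refine (he.summable_iff fun k hk => ?_).1 ?_
    · simp [Function.extend_apply' _ _ _ (by simpa using hk), Real.zero_rpow hr]
    · simpa only [Function.comp_def, he.extend_apply] using hφy

theorem summable_rpow_mul_rpow_of_le_s12 {ι : Type*} {w x y : ι → ℝ} {K L a b s₀ r : ℝ}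
    (hw : ∀ i, 1 ≤ w i) (hsum : Summable fun i => w i ^ (-s₀)) (hr : 0 ≤ r)
    (hx0 : ∀ i, 0 ≤ x i) (hx : ∀ i, x i ≤ K * w i ^ a)
    (hy0 : ∀ i, 0 ≤ y i) (hy : ∀ i, y i ≤ L * w i ^ b) (hab : (a + b) * r ≤ -s₀) :
    Summable fun i => x i ^ r * y i ^ r := by
  refine .of_nonneg_of_le (fun i => mul_nonneg (Real.rpow_nonneg (hx0 i) r)
    (Real.rpow_nonneg (hy0 i) r)) (fun i => ?_) (hsum.mul_left ((K * L) ^ r))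
  have hwi : 0 < w i := one_pos.trans_le (hw i)
  have hK : 0 ≤ K := nonneg_of_mul_nonneg_left ((hx0 i).trans (hx i)) (by positivity)
  have hL : 0 ≤ L := nonneg_of_mul_nonneg_left ((hy0 i).trans (hy i)) (by positivity)
  calc x i ^ r * y i ^ r = (x i * y i) ^ r := (Real.mul_rpow (hx0 i) (hy0 i)).symm
    _ ≤ (K * w i ^ a * (L * w i ^ b)) ^ r :=
        Real.rpow_le_rpow (mul_nonneg (hx0 i) (hy0 i))
          (mul_le_mul (hx i) (hy i) (hy0 i) ((hx0 i).trans (hx i))) hr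
    _ = (K * L) ^ r * w i ^ ((a + b) * r) := by
        rw [Real.rpow_mul hwi.le, Real.rpow_add hwi, ← Real.mul_rpow (by positivity) (by positivity)]
        ring_nf
    _ ≤ (K * L) ^ r * w i ^ (-s₀) := by
        gcongr
        exact hw i

namespace ENNReal.HolderConjugate

variable {p q : ℝ≥0∞} [HolderConjugate p q]

lemma inv_toReal_add_inv_toReal : p.toReal⁻¹ + q.toReal⁻¹ = 1 := by
  have h := congr(ENNReal.toReal $(inv_add_inv_eq_one p q))
  rwa [toReal_add (inv_ne_top.2 (ne_zero p q)) (inv_ne_top.2 (ne_zero q p)), toReal_inv,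
    toReal_inv, toReal_one] at h

lemma two_le_of_le_two (hp : p ≤ 2) : 2 ≤ q := by
  rw [← ENNReal.inv_le_inv, ← one_sub_inv p q, ← one_sub_inv_two]
  exact tsub_le_tsub_left (ENNReal.inv_le_inv.2 hp) 1

end ENNReal.HolderConjugate

section Interpolation

variable {α E : Type*} [MeasurableSpace α] {μ : Measure α} [NormedAddCommGroup E] {f : α → E}

theorem eLpNorm'_rpow_le_eLpNorm_two_sq_mul_eLpNorm_top_rpow (hf : AEStronglyMeasurable f μ)
    {q : ℝ} (hq : 2 ≤ q) :
    eLpNorm' f q μ ^ q ≤ eLpNorm f 2 μ ^ (2 : ℝ) * eLpNorm f ∞ μ ^ (q - 2) := by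
  have hpt : ∀ᵐ x ∂μ, ‖f x‖ₑ ^ q ≤ eLpNorm f ∞ μ ^ (q - 2) * ‖f x‖ₑ ^ (2 : ℝ) := by
    filter_upwards [enorm_ae_le_eLpNormEssSup f μ] with x hx
    calc ‖f x‖ₑ ^ q = ‖f x‖ₑ ^ (q - 2) * ‖f x‖ₑ ^ (2 : ℝ) := by
          rw [← ENNReal.rpow_add_of_nonneg _ _ (by linarith) zero_le_two, sub_add_cancel]
      _ ≤ eLpNorm f ∞ μ ^ (q - 2) * ‖f x‖ₑ ^ (2 : ℝ) := by
          gcongr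
          rwa [eLpNorm_exponent_top]
  rw [← lintegral_rpow_enorm_eq_rpow_eLpNorm' (by linarith),
    eLpNorm_eq_eLpNorm' two_ne_zero ENNReal.ofNat_ne_top, ENNReal.toReal_ofNat,
    ← lintegral_rpow_enorm_eq_rpow_eLpNorm' zero_lt_two, mul_comm]
  calc ∫⁻ x, ‖f x‖ₑ ^ q ∂μ ≤ ∫⁻ x, eLpNorm f ∞ μ ^ (q - 2) * ‖f x‖ₑ ^ (2 : ℝ) ∂μ :=
        lintegral_mono_ae hpt
    _ = _ := lintegral_const_mul'' _ (hf.enorm.pow_const _)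

/-- For `q = ∞` the exponents read `2 / 0 = 0` and `1 - 0 = 1`, so the statement stays true. -/
theorem eLpNorm_le_eLpNorm_two_rpow_mul_eLpNorm_top_rpow (hf : AEStronglyMeasurable f μ)
    {q : ℝ≥0∞} (hq : 2 ≤ q) :
    eLpNorm f q μ ≤ eLpNorm f 2 μ ^ (2 / q.toReal) * eLpNorm f ∞ μ ^ (1 - 2 / q.toReal) := by
  obtain rfl | hq_top := eq_or_ne q ∞
  · simp
  have hQ : 2 ≤ q.toReal := by simpa using ENNReal.toReal_mono hq_top hq
  have hQ0 : 0 < q.toReal := by linarith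
  rw [eLpNorm_eq_eLpNorm' (by positivity) hq_top]
  calc eLpNorm' f q.toReal μ = (eLpNorm' f q.toReal μ ^ q.toReal) ^ q.toReal⁻¹ := by
        rw [← ENNReal.rpow_mul, mul_inv_cancel₀ hQ0.ne', ENNReal.rpow_one]
    _ ≤ (eLpNorm f 2 μ ^ (2 : ℝ) * eLpNorm f ∞ μ ^ (q.toReal - 2)) ^ q.toReal⁻¹ := by
        gcongr
        exact eLpNorm'_rpow_le_eLpNorm_two_sq_mul_eLpNorm_top_rpow hf hQ
    _ = _ := by
        rw [ENNReal.mul_rpow_of_nonneg _ _ (by positivity), ← ENNReal.rpow_mul, ← ENNReal.rpow_mul]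
        congr 2
        field_simp

theorem eLpNorm_le_eLpNorm_top_rpow_of_eLpNorm_two_eq_one {p q : ℝ≥0∞}
    [ENNReal.HolderConjugate p q] (hp : p ≤ 2) (hf : AEStronglyMeasurable f μ)
    (hf2 : eLpNorm f 2 μ = 1) :
    eLpNorm f q μ ≤ eLpNorm f ∞ μ ^ (2 / p.toReal - 1) := by
  have hexp : 1 - 2 / q.toReal = 2 / p.toReal - 1 := by
    have := ENNReal.HolderConjugate.inv_toReal_add_inv_toReal (p := p) (q := q)
    rw [div_eq_mul_inv, div_eq_mul_inv]
    linarith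
  simpa [hf2, hexp] using eLpNorm_le_eLpNorm_two_rpow_mul_eLpNorm_top_rpow hf
    (ENNReal.HolderConjugate.two_le_of_le_two (q := q) hp)

end Interpolation

namespace ContinuousLinearMap

variable {α 𝕜 E F G : Type*} {m : MeasurableSpace α} {μ : Measure α}
    {p q : ℝ≥0∞} [NontriviallyNormedField 𝕜]
    [NormedAddCommGroup E] [NormedAddCommGroup F] [NormedAddCommGroup G]
    [NormedSpace 𝕜 E] [NormedSpace 𝕜 F] [NormedSpace 𝕜 G] [NormedSpace ℝ G]
    [SMulCommClass ℝ 𝕜 G] [CompleteSpace G] [Fact (1 ≤ p)] [Fact (1 ≤ q)]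
    [ENNReal.HolderConjugate p q] (B : E →L[𝕜] F →L[𝕜] G)

lemma norm_lpPairing_apply_apply_le (f : Lp E p μ) (g : Lp F q μ) :
    ‖B.lpPairing μ p q f g‖ ≤ ‖B‖ * ‖f‖ * ‖g‖ := by
  simp only [lpPairing, coe_comp, Function.comp_apply, postcomp_apply, ← L1.integral_eq']
  exact (L1.norm_integral_le _).trans (B.norm_holder_apply_apply_le f g)

lemma norm_lpPairing_flip_apply_le (g : Lp F q μ) :
    ‖(B.lpPairing μ p q).flip g‖ ≤ ‖B‖ * ‖g‖ :=
  opNorm_le_bound _ (by positivity) fun f => by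
    simpa only [flip_apply, mul_right_comm] using B.norm_lpPairing_apply_apply_le f g

end ContinuousLinearMap

section IntegralAgainst

variable {α : Type*} [MeasurableSpace α] {μ : Measure α} {p q : ℝ≥0∞} [Fact (1 ≤ p)]
  [Fact (1 ≤ q)] [ENNReal.HolderConjugate p q] {g : α → ℂ}

lemma lpPairing_mul_flip_toLp_apply (hg : MemLp g q μ) (f : Lp ℂ p μ) :
    ((ContinuousLinearMap.mul ℂ ℂ).lpPairing μ p q).flip (hg.toLp g) f = ∫ x, f x * g x ∂μ := by
  rw [ContinuousLinearMap.flip_apply, ContinuousLinearMap.lpPairing_eq_integral]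
  exact integral_congr_ae (hg.coeFn_toLp.mono fun x hx => by simp [hx])

lemma norm_lpPairing_mul_flip_toLp_le (hp : p ≤ 2) (hg : MemLp g q μ) (hg2 : eLpNorm g 2 μ = 1)
    {K : ℝ} (hK : 0 ≤ K) (hgK : eLpNorm g ∞ μ ≤ ENNReal.ofReal K) :
    ‖((ContinuousLinearMap.mul ℂ ℂ).lpPairing μ p q).flip (hg.toLp g)‖ ≤
      K ^ (2 / p.toReal - 1) := by
  have hp1 : 1 ≤ p.toReal := by
    simpa using ENNReal.toReal_mono (hp.trans_lt ENNReal.ofNat_lt_top).ne (Fact.out : 1 ≤ p)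
  have hp2 : p.toReal ≤ 2 := by simpa using ENNReal.toReal_mono ENNReal.ofNat_ne_top hp
  have hβ : 0 ≤ 2 / p.toReal - 1 := by
    rw [sub_nonneg, le_div_iff₀ (by positivity)]
    linarith
  have hgq : eLpNorm g q μ ≤ ENNReal.ofReal (K ^ (2 / p.toReal - 1)) := by
    rw [← ENNReal.ofReal_rpow_of_nonneg hK hβ]
    exact (eLpNorm_le_eLpNorm_top_rpow_of_eLpNorm_two_eq_one hp hg.1 hg2).trans (by gcongr)
  calc _ ≤ ‖ContinuousLinearMap.mul ℂ ℂ‖ * ‖hg.toLp g‖ :=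
        ContinuousLinearMap.norm_lpPairing_flip_apply_le _ _
    _ ≤ 1 * (eLpNorm g q μ).toReal := by
        rw [Lp.norm_toLp]
        gcongr
        exact ContinuousLinearMap.opNorm_mul_le ℂ ℂ
    _ ≤ K ^ (2 / p.toReal - 1) := by
        rw [one_mul]
        exact ENNReal.toReal_le_of_le_ofReal (by positivity) hgq

end IntegralAgainst

theorem norm_toLp_le_measure_univ_rpow_mul {α E F : Type*} [MeasurableSpace α] {μ : Measure α}
    [IsFiniteMeasure μ] [NormedAddCommGroup E] [NormedAddCommGroup F] {p : ℝ≥0∞} [Fact (1 ≤ p)]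
    (hp : p ≤ 2) {f : α → E} (hf : MemLp f p μ) {u : α → F} (hu : eLpNorm u 2 μ = 1) {c : ℝ}
    (hc : 0 ≤ c) (hfu : ∀ x, ‖f x‖ ≤ c * ‖u x‖) :
    ‖hf.toLp f‖ ≤ (μ Set.univ ^ (1 / p.toReal - 1 / 2)).toReal * c := by
  have hexp : 0 ≤ 1 / p.toReal - 1 / 2 := by
    have : p.toReal ≤ 2 := by simpa using ENNReal.toReal_mono ENNReal.ofNat_ne_top hp
    have : 0 < p.toReal :=
      ENNReal.toReal_pos (one_pos.trans_le Fact.out).ne' (hp.trans_lt ENNReal.ofNat_lt_top).ne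
    rw [sub_nonneg]
    gcongr
  have hfp : eLpNorm f p μ ≤ μ Set.univ ^ (1 / p.toReal - 1 / 2) * ENNReal.ofReal c := by
    calc eLpNorm f p μ ≤ eLpNorm f 2 μ * μ Set.univ ^ (1 / p.toReal - 1 / 2) := by
          simpa using eLpNorm_le_eLpNorm_mul_rpow_measure_univ hp hf.1
      _ ≤ ENNReal.ofReal c * eLpNorm u 2 μ * μ Set.univ ^ (1 / p.toReal - 1 / 2) := by
          gcongr
          exact eLpNorm_le_mul_eLpNorm_of_ae_le_mul (.of_forall hfu) 2
      _ = _ := by rw [hu, mul_one, mul_comm]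
  rw [Lp.norm_toLp, ← ENNReal.toReal_ofReal hc, ← ENNReal.toReal_mul]
  exact ENNReal.toReal_mono (ENNReal.mul_ne_top
    (ENNReal.rpow_ne_top_of_nonneg hexp (measure_ne_top μ _)) ENNReal.ofReal_ne_top) hfp

theorem statement_12_general
    {M : Type*} [MeasurableSpace M] {μ : Measure M} [IsFiniteMeasure μ]
    {ι : Type*} [Countable ι]
    (r : ℝ) (hr0 : 0 < r)
    (p : ℝ≥0∞) [Fact (1 ≤ p)] (hp2 : p ≤ 2)
    (s₀ s ν₂ C₂ C : ℝ) (hC₂ : 0 < C₂) (hC : 0 < C)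
    (hsexp : ν₂ * (2 / p.toReal - 1) + s₀ / r ≤ s)
    (w : ι → ℝ) (hw : ∀ ξ, 1 ≤ w ξ)
    (hw0 : Summable fun ξ => w ξ ^ (-s₀))
    (u v : ι → M → ℂ)
    (hvI : ∀ ξ, MemLp (v ξ) ∞ μ)
    (hun : ∀ ξ, eLpNorm (u ξ) 2 μ = 1) (hvn : ∀ ξ, eLpNorm (v ξ) 2 μ = 1)
    (hvb : ∀ ξ, eLpNorm (v ξ) ∞ μ ≤ ENNReal.ofReal (C₂ * w ξ ^ ν₂))
    (σ : ι → M → ℂ)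
    (hσb : ∀ ξ x, ‖σ ξ x‖ ≤ C * w ξ ^ (-s))
    (hmem : ∀ ξ, MemLp (fun x => σ ξ x * u ξ x) p μ)
    (A : Lp ℂ p μ →L[ℂ] Lp ℂ p μ)
    (hA : ∀ f : Lp ℂ p μ,
      HasSum (fun ξ => (∫ x, f x * (starRingEnd ℂ) (v ξ x) ∂μ)
        • MemLp.toLp (fun x => σ ξ x * u ξ x) (hmem ξ)) (A f)) :
    IsRNuclear r A := by
  obtain ⟨q, hpq⟩ : ∃ q, ENNReal.HolderConjugate p q := ⟨_, .inv_one_sub_inv' Fact.out⟩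
  have : Fact (1 ≤ q) := ⟨ENNReal.HolderConjugate.one_le q p⟩
  set β := 2 / p.toReal - 1
  set D := (μ Set.univ ^ (1 / p.toReal - 1 / 2)).toReal
  have hv : ∀ ξ, MemLp (star (v ξ)) q μ := fun ξ => ((hvI ξ).mono_exponent le_top).star
  let φ ξ := ((ContinuousLinearMap.mul ℂ ℂ).lpPairing μ p q).flip ((hv ξ).toLp _)
  have hφ : ∀ ξ, ‖φ ξ‖ ≤ C₂ ^ β * w ξ ^ (ν₂ * β) := fun ξ => by
    have hwξ : 0 ≤ w ξ := zero_le_one.trans (hw ξ)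
    calc ‖φ ξ‖ ≤ (C₂ * w ξ ^ ν₂) ^ β :=
          norm_lpPairing_mul_flip_toLp_le hp2 (hv ξ) (by rw [eLpNorm_star, hvn])
            (by positivity) (by rw [eLpNorm_star]; exact hvb ξ)
      _ = C₂ ^ β * w ξ ^ (ν₂ * β) := by
          rw [Real.mul_rpow hC₂.le (by positivity), ← Real.rpow_mul hwξ]
  have hY : ∀ ξ, ‖(hmem ξ).toLp _‖ ≤ D * C * w ξ ^ (-s) := fun ξ => by
    have hwξ : 0 ≤ w ξ := zero_le_one.trans (hw ξ)
    rw [mul_assoc]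
    refine norm_toLp_le_measure_univ_rpow_mul hp2 (hmem ξ) (hun ξ) (by positivity) fun x => ?_
    rw [norm_mul]
    exact mul_le_mul_of_nonneg_right (hσb ξ x) (norm_nonneg _)
  have hexp : (ν₂ * β + -s) * r ≤ -s₀ := by
    have := (div_le_iff₀ hr0).1 (le_sub_iff_add_le'.2 hsexp)
    linarith
  refine isRNuclear_of_hasSum hr0.ne' A φ _ (fun f => ?_) (summable_rpow_mul_rpow_of_le_s12 hw hw0
    hr0.le (fun _ => norm_nonneg _) hφ (fun _ => norm_nonneg _) hY hexp)
  simpa only [φ, lpPairing_mul_flip_toLp_apply, Pi.star_apply, starRingEnd_apply] using hA f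

theorem statement_12
    {M : Type*} [MeasurableSpace M] {μ : Measure M} [IsFiniteMeasure μ]
    {ι : Type*} [Countable ι]
    (r : ℝ) (hr0 : 0 < r) (hr1 : r ≤ 1)
    (p : ℝ≥0∞) [Fact (1 ≤ p)] (hp2 : p ≤ 2)
    (s₀ s ν₂ C₂ C : ℝ) (hs₀ : 0 < s₀) (hν₂ : 0 < ν₂) (hC₂ : 0 < C₂) (hC : 0 < C)
    (hsexp : ν₂ * (2 / p.toReal - 1) + s₀ / r ≤ s)
    (w : ι → ℝ) (hw : ∀ ξ, 1 ≤ w ξ)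
    (hw0 : Summable fun ξ => w ξ ^ (-s₀))
    (u v : ι → M → ℂ)
    (hu2 : ∀ ξ, MemLp (u ξ) 2 μ) (hv2 : ∀ ξ, MemLp (v ξ) 2 μ)
    (huI : ∀ ξ, MemLp (u ξ) ∞ μ) (hvI : ∀ ξ, MemLp (v ξ) ∞ μ)
    (hun : ∀ ξ, eLpNorm (u ξ) 2 μ = 1) (hvn : ∀ ξ, eLpNorm (v ξ) 2 μ = 1)
    (hvb : ∀ ξ, eLpNorm (v ξ) ∞ μ ≤ ENNReal.ofReal (C₂ * w ξ ^ ν₂))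
    (σ : ι → M → ℂ) (hσm : ∀ ξ, AEStronglyMeasurable (σ ξ) μ)
    (hσb : ∀ ξ x, ‖σ ξ x‖ ≤ C * w ξ ^ (-s))
    (hmem : ∀ ξ, MemLp (fun x => σ ξ x * u ξ x) p μ)
    (A : Lp ℂ p μ →L[ℂ] Lp ℂ p μ)
    (hA : ∀ f : Lp ℂ p μ,
      HasSum (fun ξ => (∫ x, f x * (starRingEnd ℂ) (v ξ x) ∂μ)
        • MemLp.toLp (fun x => σ ξ x * u ξ x) (hmem ξ)) (A f)) :
    IsRNuclear r A :=
  statement_12_general r hr0 p hp2 s₀ s ν₂ C₂ C hC₂ hC hsexp w hw hw0 u v hvI hun hvn hvb σ hσb hmem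
    A hA
end
end
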